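/- Let G be a finite, simple, undirected, connected graph on V with diameter D, let S : V → {A,B} with both groups V_A, V_B nonempty, and let h : V → [0,1] be a score with realized decisions H(i) ∈ {0,1}. If the realized decisions are non-degenerate in the sense that 0 < Σ_{k ∈ V} H(k) < |V|, then for every d ≥ D and s ∈ {A,B}, the group-level perceived fairness computed from realized decisions, F_d(s,H) = (1/|V_s|) Σ_{i ∈ V_s} 1{E_i^(d)[H] ≤ H(i)}, equals the realized group acceptance rate (1/|V_s|) Σ_{i ∈ V_s} H(i). -/

import Mathlib

/-- The `d`-hop neighborhood `N^(d)(i)`: vertices at graph distance at most `d` from `i`. -/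
def hopNbhd {V : Type*} [Fintype V] (G : SimpleGraph V)
    [∀ i d, DecidablePred fun j : V => G.dist i j ≤ d] (i : V) (d : ℕ) : Finset V :=
  Finset.univ.filter (fun j => G.dist i j ≤ d)

/-- The `d`-neighborhood peer expectation `E_i^(d)[f]`. -/
noncomputable def peerExp {V : Type*} [Fintype V] (G : SimpleGraph V)
    [∀ i d, DecidablePred fun j : V => G.dist i j ≤ d] (i : V) (d : ℕ) (f : V → ℝ) : ℝ :=
  (∑ j ∈ hopNbhd G i d, f j) / ((hopNbhd G i d).card : ℝ)

/-- The group `V_s` of a two-group labeling `S : V → Bool`. -/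
def groupSet {V : Type*} [Fintype V] [DecidableEq V] (S : V → Bool) (s : Bool) : Finset V :=
  Finset.univ.filter (fun i => S i = s)

/-- Group-level perceived fairness at depth `d`, computed from realized decisions:
`F_d(s,H) = (1/|V_s|) Σ_{i ∈ V_s} 1{E_i^(d)[H] ≤ H(i)}`. -/
noncomputable def Fgroup {V : Type*} [Fintype V] [DecidableEq V] (G : SimpleGraph V)
    [∀ i d, DecidablePred fun j : V => G.dist i j ≤ d]
    (S : V → Bool) (d : ℕ) (s : Bool) (H : V → ℝ) : ℝ :=
  (∑ i ∈ groupSet S s, if peerExp G i d H ≤ H i then (1 : ℝ) else 0) /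
    ((groupSet S s).card : ℝ)

/-! Once `d` reaches the diameter, every `d`-hop neighborhood is the whole graph, so every
peer expectation is the global mean `μ` of `H`. Non-degeneracy puts `μ` strictly between `0`
and `1`, hence for binary `H` the indicator `1{μ ≤ H i}` is `H i` itself, and averaging
over a group turns perceived fairness into the acceptance rate. -/

section PeerExpectation

variable {V : Type*} [Fintype V] (G : SimpleGraph V)
  [∀ i d, DecidablePred fun j : V => G.dist i j ≤ d]

theorem hopNbhd_eq_univ {i : V} {d : ℕ} (hi : ∀ j, G.dist i j ≤ d) :
    hopNbhd G i d = Finset.univ :=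
  Finset.filter_true_of_mem fun j _ => hi j

theorem peerExp_eq_mean {i : V} {d : ℕ} (hi : ∀ j, G.dist i j ≤ d) (f : V → ℝ) :
    peerExp G i d f = (∑ k, f k) / (Fintype.card V : ℝ) := by
  rw [peerExp, hopNbhd_eq_univ G hi, Finset.card_univ]

end PeerExpectation

theorem ite_le_eq_self_of_binary {x μ : ℝ} (hx : x = 0 ∨ x = 1) (hμ₀ : 0 < μ) (hμ₁ : μ < 1) :
    (if μ ≤ x then (1 : ℝ) else 0) = x := by
  rcases hx with rfl | rfl
  · exact if_neg (not_le.mpr hμ₀)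
  · exact if_pos hμ₁.le

theorem mean_mem_Ioo_of_nondegenerate {V : Type*} [Fintype V] {H : V → ℝ}
    (hnd : 0 < ∑ k, H k ∧ ∑ k, H k < (Fintype.card V : ℝ)) :
    (∑ k, H k) / (Fintype.card V : ℝ) ∈ Set.Ioo 0 1 := by
  have hcard : (0 : ℝ) < Fintype.card V := hnd.1.trans hnd.2
  exact ⟨div_pos hnd.1 hcard, (div_lt_one hcard).mpr hnd.2⟩

/-- for a connected graph of diameter `D`, two nonempty groups, a score
`h : V → [0,1]` with realized binary decisions `H`, if the realized decisions are
non-degenerate then for every `d ≥ D` and each group `s` the group-level perceived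
fairness computed from realized decisions equals the realized group acceptance rate. -/
theorem stmt_13 {V : Type*} [Fintype V] [DecidableEq V] (G : SimpleGraph V)
    [∀ i d, DecidablePred fun j : V => G.dist i j ≤ d]
    (hconn : G.Connected) (D : ℕ) (hD : ∀ i j : V, G.dist i j ≤ D)
    (S : V → Bool) (hA : (groupSet S true).Nonempty) (hB : (groupSet S false).Nonempty)
    (h : V → ℝ) (hscore : ∀ i, h i ∈ Set.Icc (0 : ℝ) 1)
    (H : V → ℝ) (hHbin : ∀ i, H i = 0 ∨ H i = 1)
    (hnd : 0 < ∑ k, H k ∧ ∑ k, H k < (Fintype.card V : ℝ)) :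
    ∀ d : ℕ, D ≤ d → ∀ s : Bool,
      Fgroup G S d s H = (∑ i ∈ groupSet S s, H i) / ((groupSet S s).card : ℝ) := by
  intro d hd s
  obtain ⟨hμ₀, hμ₁⟩ := mean_mem_Ioo_of_nondegenerate hnd
  have hindicator : ∀ i, (if peerExp G i d H ≤ H i then (1 : ℝ) else 0) = H i := fun i => by
    rw [peerExp_eq_mean G (fun j => (hD i j).trans hd)]
    exact ite_le_eq_self_of_binary (hHbin i) hμ₀ hμ₁
  simp only [Fgroup, hindicator]
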